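/- arXiv:2603.27804 — 6 statements merged into one kernel-verified Lean document; each statement's English description precedes it below -/
import Mathlib

section
/- If x is a fixed point of the scaled softmax S_β, then the components of x take at most two distinct values. (Equivalently: the map t ↦ exp(βt)/Z − t, with Z = Σ_i exp(β x_i) fixed, has at most two zeros, by strict convexity of the exponential.) -/
open Real Finset

noncomputable def softmax (n : ℕ) (β : ℝ) (x : Fin n → ℝ) : Fin n → ℝ :=
  fun j => Real.exp (β * x j) / ∑ i, Real.exp (β * x i)

theorem exists_forall_eq_or_eq_of_forall_lt_lt {ι α : Type*} [LinearOrder α] [Nonempty α]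
    (f : ι → α) (h : ∀ i j k, f i < f j → f j < f k → False) :
    ∃ a b, ∀ i, f i = a ∨ f i = b := by
  by_contra! hthree
  obtain ⟨i, -⟩ := hthree (Classical.arbitrary α) (Classical.arbitrary α)
  obtain ⟨j, hji, -⟩ := hthree (f i) (f i)
  obtain ⟨k, hki, hkj⟩ := hthree (f i) (f j)
  rcases hji.lt_or_gt with hji | hji <;> rcases hki.lt_or_gt with hki | hki <;>
    rcases hkj.lt_or_gt with hkj | hkj <;>
    first
    | order
    | exact h i j k ‹_› ‹_› | exact h i k j ‹_› ‹_› | exact h j i k ‹_› ‹_›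
    | exact h j k i ‹_› ‹_› | exact h k i j ‹_› ‹_› | exact h k j i ‹_› ‹_›

theorem StrictConvexOn.ne_affine_of_lt_of_lt {s : Set ℝ} {f : ℝ → ℝ}
    (hf : StrictConvexOn ℝ s f) {a b c m k : ℝ} (ha : a ∈ s) (hc : c ∈ s)
    (hab : a < b) (hbc : b < c) (hfa : f a = m * a + k) (hfc : f c = m * c + k) :
    f b ≠ m * b + k := by
  intro hfb
  have hslope := hf.slope_strict_mono_adjacent ha hc hab hbc
  rw [hfa, hfb, hfc, show m * b + k - (m * a + k) = m * (b - a) by ring,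
    show m * c + k - (m * b + k) = m * (c - b) by ring,
    mul_div_cancel_right₀ _ (sub_ne_zero.2 hab.ne'),
    mul_div_cancel_right₀ _ (sub_ne_zero.2 hbc.ne')] at hslope
  exact lt_irrefl m hslope

theorem strictConvexOn_exp_const_mul {β : ℝ} (hβ : β ≠ 0) :
    StrictConvexOn ℝ Set.univ fun t => exp (β * t) :=
  (strictConvexOn_exp.subset (Set.subset_univ _) (convex_univ.linear_image _)).comp_convexOn
    ((LinearMap.mul ℝ ℝ β).convexOn convex_univ) (exp_monotone.monotoneOn _)
    (mul_right_injective₀ hβ).injOn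

theorem exp_mul_eq_sum_mul_of_softmax_eq {n : ℕ} {β : ℝ} {x : Fin n → ℝ}
    (hfix : softmax n β x = x) (j : Fin n) :
    exp (β * x j) = (∑ i, exp (β * x i)) * x j := by
  have hZ : 0 < ∑ i, exp (β * x i) := sum_pos (fun i _ => exp_pos _) ⟨j, mem_univ j⟩
  have hj := congrFun hfix j
  rw [softmax, div_eq_iff hZ.ne'] at hj
  rw [hj, mul_comm]

/-- A fixed point of the scaled softmax has components taking at most two distinct values. -/
theorem softmax_fixed_point_two_values (n : ℕ) (β : ℝ) (hβ : 0 < β)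
    (x : Fin n → ℝ) (hfix : softmax n β x = x) :
    ∃ a b : ℝ, ∀ j, x j = a ∨ x j = b := by
  have hroot j : exp (β * x j) = (∑ i, exp (β * x i)) * x j + 0 := by
    rw [add_zero, exp_mul_eq_sum_mul_of_softmax_eq hfix j]
  refine exists_forall_eq_or_eq_of_forall_lt_lt x fun i j k hij hjk => ?_
  exact (strictConvexOn_exp_const_mul hβ.ne').ne_affine_of_lt_of_lt (Set.mem_univ _)
    (Set.mem_univ _) hij hjk (hroot i) (hroot k) (hroot j)
end

section
/- For any nonempty proper subset J ⊂ [n], the line segment L_J = {l_J(x) : x ∈ [0, 1/|J|]}, where l_J(x) has value x on coordinates in J and (1−|J|x)/(n−|J|) on the remaining coordinates, is invariant under the scaled softmax: S_β(L_J) ⊆ L_J for all β > 0. -/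
open Real Finset

/-- The parametrization of the line segment L_J. -/
noncomputable def lineSeg (n : ℕ) (J : Finset (Fin n)) (c : ℝ) : Fin n → ℝ :=
  fun j => if j ∈ J then c else (1 - J.card * c) / (n - J.card)

/-!
Softmax maps equal coordinates to equal coordinates, so it sends a point of `L_J` (constant on
`J` and on its complement) to a probability vector with the same two-block structure. Every such
vector lies on `L_J`, with parameter its average over `J`.
-/

lemma softmax_nonneg {n : ℕ} (β : ℝ) (x : Fin n → ℝ) (j : Fin n) : 0 ≤ softmax n β x j :=
  div_nonneg (exp_pos _).le (sum_nonneg fun _ _ => (exp_pos _).le)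

lemma sum_softmax {n : ℕ} [NeZero n] (β : ℝ) (x : Fin n → ℝ) : ∑ j, softmax n β x j = 1 := by
  simp only [softmax, ← sum_div]
  exact div_self (sum_pos (fun _ _ => exp_pos _) univ_nonempty).ne'

lemma softmax_eq_of_eq {n : ℕ} (β : ℝ) {x : Fin n → ℝ} {i j : Fin n} (h : x i = x j) :
    softmax n β x i = softmax n β x j := by
  simp only [softmax, h]

lemma lineSeg_eq_of_mem_iff {n : ℕ} (J : Finset (Fin n)) (c : ℝ) {i j : Fin n}
    (h : i ∈ J ↔ j ∈ J) : lineSeg n J c i = lineSeg n J c j := by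
  simp only [lineSeg, h]

lemma sum_div_card_mem_Icc {ι : Type*} [Fintype ι] (J : Finset ι) {y : ι → ℝ}
    (h0 : ∀ i, 0 ≤ y i) (h1 : ∑ i, y i ≤ 1) :
    (∑ i ∈ J, y i) / J.card ∈ Set.Icc (0 : ℝ) (1 / J.card) := by
  refine ⟨div_nonneg (sum_nonneg fun i _ => h0 i) J.card.cast_nonneg, ?_⟩
  gcongr
  exact (sum_le_sum_of_subset_of_nonneg J.subset_univ fun i _ _ => h0 i).trans h1

lemma eq_lineSeg_of_sum_eq_one {n : ℕ} (J : Finset (Fin n)) {y : Fin n → ℝ}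
    (hy : ∑ i, y i = 1) (hconst : ∀ i j, (i ∈ J ↔ j ∈ J) → y i = y j) :
    y = lineSeg n J ((∑ i ∈ J, y i) / J.card) := by
  funext j
  by_cases hj : j ∈ J
  · have hsum : ∑ i ∈ J, y i = J.card * y j := by
      rw [sum_congr rfl fun i hi => hconst i j (iff_of_true hi hj), sum_const, nsmul_eq_mul]
    have hk : (J.card : ℝ) ≠ 0 := Nat.cast_ne_zero.mpr (card_ne_zero_of_mem hj)
    rw [lineSeg, if_pos hj, hsum, mul_div_cancel_left₀ _ hk]
  · have hsum : ∑ i ∈ Jᶜ, y i = Jᶜ.card * y j := by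
      rw [sum_congr rfl fun i hi => hconst i j (iff_of_false (mem_compl.mp hi) hj), sum_const,
        nsmul_eq_mul]
    have hcard : (Jᶜ.card : ℝ) = n - J.card := by
      rw [card_compl, Fintype.card_fin,
        Nat.cast_sub (J.card_le_univ.trans_eq (Fintype.card_fin n))]
    have hpos : (0 : ℝ) < n - J.card := by
      rw [← hcard]
      exact_mod_cast card_pos.mpr ⟨j, mem_compl.mpr hj⟩
    have hsplit := sum_add_sum_compl J y
    rw [hy, hsum, hcard] at hsplit
    rw [lineSeg, if_neg hj, mul_div_cancel_of_imp' fun hk => by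
      rw [card_eq_zero.mp (Nat.cast_eq_zero.mp hk), sum_empty], eq_div_iff hpos.ne']
    linarith

theorem softmax_lineSeg_invariant_general (n : ℕ) (β : ℝ)
    (J : Finset (Fin n))
    (c : ℝ) :
    ∃ c' ∈ Set.Icc (0 : ℝ) (1 / J.card),
      softmax n β (lineSeg n J c) = lineSeg n J c' := by
  rcases n.eq_zero_or_pos with rfl | hn
  · exact ⟨0, ⟨le_rfl, by positivity⟩, Subsingleton.elim _ _⟩
  have : NeZero n := ⟨hn.ne'⟩
  refine ⟨_, sum_div_card_mem_Icc J (softmax_nonneg β _) (sum_softmax β _).le,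
    eq_lineSeg_of_sum_eq_one J (sum_softmax β _) fun i j h => ?_⟩
  exact softmax_eq_of_eq β (lineSeg_eq_of_mem_iff J c h)

/-- For nonempty proper J ⊂ [n], the segment L_J is invariant under the scaled softmax. -/
theorem softmax_lineSeg_invariant (n : ℕ) (β : ℝ) (hβ : 0 < β)
    (J : Finset (Fin n)) (hJ : J.Nonempty) (hJne : J ≠ Finset.univ)
    (c : ℝ) (hc : c ∈ Set.Icc (0 : ℝ) (1 / J.card)) :
    ∃ c' ∈ Set.Icc (0 : ℝ) (1 / J.card),
      softmax n β (lineSeg n J c) = lineSeg n J c' :=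
  softmax_lineSeg_invariant_general n β J c
end

section
/- For any affine function a(x) = αx + γ, the equation log(1/x − k) = a(x) has at most three solutions in (0, 1/k). -/
/-!
Put `f x = log (1 / x - k) - (α x + γ)`. On `(0, 1 / k)` we have
`f' x = -1 / (x (1 - k x)) - α` and `f'' x = (1 - 2 k x) / (x (1 - k x))²`, so `f''` vanishes at
most once there (at the inflection point `1 / (2 k)`). By Rolle's theorem, between two zeros of a
differentiable function on an interval lies a zero of its derivative, so `f'` has at most two zeros
and `f` at most three.
-/

open Real Set

section Interleaved

variable {α : Type*} [LinearOrder α] {s t : Set α}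

theorem Finset.card_le_ncard_add_one_of_interleaved (ht : t.Finite) {u : Finset α}
    (hus : ↑u ⊆ s) (h : ∀ x ∈ s, ∀ y ∈ s, x < y → ∃ z ∈ t, x < z ∧ z < y) :
    u.card ≤ t.ncard + 1 := by
  rw [ncard_eq_toFinset_card t ht]
  refine Finset.card_le_of_interleaved fun x hx y hy hxy _ => ?_
  obtain ⟨z, hzt, hz⟩ := h x (hus hx) y (hus hy) hxy
  exact ⟨z, ht.mem_toFinset.mpr hzt, hz⟩

theorem Set.finite_of_interleaved (ht : t.Finite)
    (h : ∀ x ∈ s, ∀ y ∈ s, x < y → ∃ z ∈ t, x < z ∧ z < y) : s.Finite := by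
  by_contra hs
  obtain ⟨u, hus, hu⟩ := Set.Infinite.exists_subset_card_eq hs (t.ncard + 2)
  have := Finset.card_le_ncard_add_one_of_interleaved ht hus h
  omega

theorem Set.ncard_le_ncard_add_one_of_interleaved (ht : t.Finite)
    (h : ∀ x ∈ s, ∀ y ∈ s, x < y → ∃ z ∈ t, x < z ∧ z < y) : s.ncard ≤ t.ncard + 1 := by
  have hs := Set.finite_of_interleaved ht h
  rw [ncard_eq_toFinset_card s hs]
  exact Finset.card_le_ncard_add_one_of_interleaved ht hs.coe_toFinset.subset h

end Interleaved

section Rolle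

variable {f f' : ℝ → ℝ} {s : Set ℝ}

theorem exists_zero_deriv_between_zeros (hs : s.OrdConnected)
    (hf : ∀ x ∈ s, HasDerivAt f (f' x) x) :
    ∀ x ∈ {x ∈ s | f x = 0}, ∀ y ∈ {x ∈ s | f x = 0}, x < y →
      ∃ z ∈ {x ∈ s | f' x = 0}, x < z ∧ z < y := by
  rintro a ⟨ha, hfa⟩ b ⟨hb, hfb⟩ hab
  have hsub : Icc a b ⊆ s := hs.out ha hb
  obtain ⟨c, hc, hfc⟩ := exists_hasDerivAt_eq_zero hab
    (fun x hx => (hf x (hsub hx)).continuousAt.continuousWithinAt) (hfa.trans hfb.symm)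
    (fun x hx => hf x (hsub (Ioo_subset_Icc_self hx)))
  exact ⟨c, ⟨hsub (Ioo_subset_Icc_self hc), hfc⟩, hc⟩

theorem finite_zeros_and_ncard_le_of_hasDerivAt (hs : s.OrdConnected)
    (hf : ∀ x ∈ s, HasDerivAt f (f' x) x) {n : ℕ} (hfin : {x ∈ s | f' x = 0}.Finite)
    (hn : {x ∈ s | f' x = 0}.ncard ≤ n) :
    {x ∈ s | f x = 0}.Finite ∧ {x ∈ s | f x = 0}.ncard ≤ n + 1 :=
  ⟨Set.finite_of_interleaved hfin (exists_zero_deriv_between_zeros hs hf),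
    (Set.ncard_le_ncard_add_one_of_interleaved hfin
      (exists_zero_deriv_between_zeros hs hf)).trans (by omega)⟩

end Rolle

theorem subsingleton_setOf_one_sub_mul_eq_zero (c : ℝ) :
    {x : ℝ | 1 - c * x = 0}.Subsingleton := by
  intro x hx y hy
  have hc : c ≠ 0 := by
    rintro rfl
    norm_num at hx
  exact mul_left_cancel₀ hc (by linarith [hx.out, hy.out])

section LogInvSub

variable {k x : ℝ}

theorem one_sub_mul_pos_of_mem_Ioo (hx : x ∈ Ioo 0 (1 / k)) : 0 < 1 - k * x := by
  rcases le_or_gt k 0 with hk | hk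
  · nlinarith [hx.1]
  · have := (lt_div_iff₀ hk).mp hx.2
    linarith

theorem hasDerivAt_log_one_div_sub (h : x * (1 - k * x) ≠ 0) :
    HasDerivAt (fun y => log (1 / y - k)) (-(x * (1 - k * x))⁻¹) x := by
  obtain ⟨hx, hkx⟩ := mul_ne_zero_iff.mp h
  have hne : 1 / x - k ≠ 0 := by
    rw [div_sub' hx]
    exact div_ne_zero (by simpa [mul_comm] using hkx) hx
  have hinv : HasDerivAt (fun y => 1 / y - k) (-(x ^ 2)⁻¹) x := by
    simpa only [one_div] using (hasDerivAt_inv hx).sub_const k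
  convert hinv.log hne using 1
  field_simp

theorem hasDerivAt_neg_inv_mul_one_sub (h : x * (1 - k * x) ≠ 0) :
    HasDerivAt (fun y => -(y * (1 - k * y))⁻¹) ((1 - 2 * k * x) / (x * (1 - k * x)) ^ 2) x := by
  have hu : HasDerivAt (fun y => y * (1 - k * y)) (1 * (1 - k * x) + x * -(k * 1)) x :=
    (hasDerivAt_id x).mul (((hasDerivAt_id x).const_mul k).const_sub 1)
  exact (hu.inv h).neg.congr_deriv (by ring)

end LogInvSub

theorem log_eq_affine_at_most_three_solutions_general (k : ℝ) (α γ : ℝ) :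
    {x ∈ Set.Ioo (0 : ℝ) (1 / k) | Real.log (1 / x - k) = α * x + γ}.Finite ∧
    {x ∈ Set.Ioo (0 : ℝ) (1 / k) | Real.log (1 / x - k) = α * x + γ}.ncard ≤ 3 := by
  have hI : ∀ x ∈ Ioo (0 : ℝ) (1 / k), x * (1 - k * x) ≠ 0 := fun x hx =>
    (mul_pos hx.1 (one_sub_mul_pos_of_mem_Ioo hx)).ne'
  have hf : ∀ x ∈ Ioo (0 : ℝ) (1 / k), HasDerivAt (fun y => log (1 / y - k) - (α * y + γ))
      (-(x * (1 - k * x))⁻¹ - α) x := fun x hx =>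
    (hasDerivAt_log_one_div_sub (hI x hx)).sub ((hasDerivAt_const_mul α).add_const γ)
  have hf' : ∀ x ∈ Ioo (0 : ℝ) (1 / k), HasDerivAt (fun y => -(y * (1 - k * y))⁻¹ - α)
      ((1 - 2 * k * x) / (x * (1 - k * x)) ^ 2) x := fun x hx =>
    (hasDerivAt_neg_inv_mul_one_sub (hI x hx)).sub_const α
  have hf'' :
      {x ∈ Ioo (0 : ℝ) (1 / k) | (1 - 2 * k * x) / (x * (1 - k * x)) ^ 2 = 0}.Subsingleton :=
    (subsingleton_setOf_one_sub_mul_eq_zero (2 * k)).anti fun x ⟨hx, hx0⟩ =>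
      (div_eq_zero_iff.mp hx0).resolve_right (pow_ne_zero 2 (hI x hx))
  obtain ⟨hf'fin, hf'card⟩ := finite_zeros_and_ncard_le_of_hasDerivAt ordConnected_Ioo hf'
    hf''.finite ((ncard_le_one hf''.finite).mpr hf'')
  simpa only [sub_eq_zero] using
    finite_zeros_and_ncard_le_of_hasDerivAt ordConnected_Ioo hf hf'fin hf'card

/-- For any affine function a(x) = αx + γ, the equation log(1/x − k) = αx + γ
has at most three solutions in (0, 1/k). -/
theorem log_eq_affine_at_most_three_solutions (k : ℝ) (hk : 1 ≤ k) (α γ : ℝ) :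
    {x ∈ Set.Ioo (0 : ℝ) (1 / k) | Real.log (1 / x - k) = α * x + γ}.Finite ∧
    {x ∈ Set.Ioo (0 : ℝ) (1 / k) | Real.log (1 / x - k) = α * x + γ}.ncard ≤ 3 :=
  log_eq_affine_at_most_three_solutions_general k α γ
end

section
/- The function h_{n,k}(x) = log((1/x − k)/(n−k)) · (n−k)/(1 − nx), defined on (0,1/k) \ {1/n} and extended analytically at x = 1/n, is positive on (0, 1/k), tends to +∞ as x → 0⁺, and tends to +∞ as x → (1/k)⁻. -/
/-!
With `u = (1/x - k)/(n - k)` one has `u - 1 = (1 - n x)/((n - k) x)`, so away from `x = 1/n`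
`h(x) = (log u / (u - 1)) · x⁻¹`. On `(0, 1/k)` we have `u > 0`, and `log u / (u - 1) > 0` for
`0 < u ≠ 1`; it tends to `log' 1 = 1` as `u → 1`, so the limit at `1/n` is `n`.
As `x → 0⁺`, `u → ∞` while `(n - k)/(1 - n x) → n - k > 0`; as `x → (1/k)⁻`, `u → 0⁺`, so
`log u → -∞` while `(n - k)/(1 - n x) → (n - k)/(1 - n/k) < 0`.
-/

open Real Filter Topology

/-- The function h_{n,k}. -/
noncomputable def hFun (n k : ℕ) (x : ℝ) : ℝ :=
  Real.log ((1 / x - k) / (n - k)) * ((n - k) / (1 - n * x))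

open Set

noncomputable def hFunArg (n k : ℕ) (x : ℝ) : ℝ := (1 / x - k) / (n - k)

lemma hFun_eq_log_hFunArg_mul (n k : ℕ) (x : ℝ) :
    hFun n k x = log (hFunArg n k x) * ((n - k) / (1 - n * x)) := rfl

lemma Real.log_div_sub_one_pos {u : ℝ} (hu : 0 < u) (hu1 : u ≠ 1) : 0 < log u / (u - 1) := by
  rcases hu1.lt_or_gt with h | h
  · exact div_pos_of_neg_of_neg (log_neg hu h) (by linarith)
  · exact div_pos (log_pos h) (by linarith)

lemma Real.tendsto_log_div_sub_one_nhdsNE_one :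
    Tendsto (fun u => log u / (u - 1)) (𝓝[≠] 1) (𝓝 1) := by
  have h := hasDerivAt_iff_tendsto_slope.mp (hasDerivAt_log one_ne_zero)
  rw [inv_one] at h
  refine h.congr fun u => ?_
  rw [slope_def_field, log_one, sub_zero]

section
variable {n k : ℕ} {x : ℝ}

lemma hFunArg_sub_one (hkn : k < n) : hFunArg n k x - 1 = (1 / x - n) / (n - k) := by
  have : (n - k : ℝ) ≠ 0 := sub_ne_zero.mpr (by exact_mod_cast hkn.ne')
  rw [hFunArg]
  field_simp
  ring

lemma hFunArg_pos (hkn : k < n) (hxk : k < 1 / x) : 0 < hFunArg n k x :=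
  div_pos (sub_pos.mpr hxk) (sub_pos.mpr (by exact_mod_cast hkn))

lemma hFunArg_ne_one (hkn : k < n) (hxn : x ≠ 1 / n) : hFunArg n k x ≠ 1 := by
  have hnx : 1 / x ≠ n := by rwa [Ne, one_div, inv_eq_iff_eq_inv, ← one_div]
  rw [← sub_ne_zero, hFunArg_sub_one hkn]
  exact div_ne_zero (sub_ne_zero.mpr hnx) (sub_ne_zero.mpr (by exact_mod_cast hkn.ne'))

lemma hFun_eq_log_div_sub_one_mul_inv (hkn : k < n) (hx : x ≠ 0) (hxn : x ≠ 1 / n) :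
    hFun n k x = log (hFunArg n k x) / (hFunArg n k x - 1) * x⁻¹ := by
  have hnk : (n - k : ℝ) ≠ 0 := sub_ne_zero.mpr (by exact_mod_cast hkn.ne')
  have hn : (n : ℝ) ≠ 0 := Nat.cast_ne_zero.mpr (by omega)
  have hnx : 1 - n * x ≠ 0 := fun h => hxn (by rw [eq_div_iff hn]; linarith)
  rw [hFun_eq_log_hFunArg_mul, hFunArg_sub_one hkn]
  field_simp

lemma hFun_pos (hk : 0 < k) (hkn : k < n) (hx : x ∈ Ioo (0 : ℝ) (1 / k)) (hxn : x ≠ 1 / n) :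
    0 < hFun n k x := by
  obtain ⟨hx0, hxk⟩ := hx
  have hk' : (0 : ℝ) < k := by exact_mod_cast hk
  rw [hFun_eq_log_div_sub_one_mul_inv hkn hx0.ne' hxn]
  have hkx : (k : ℝ) < 1 / x := (lt_one_div hk' hx0).mpr hxk
  exact mul_pos (log_div_sub_one_pos (hFunArg_pos hkn hkx) (hFunArg_ne_one hkn hxn))
    (inv_pos.mpr hx0)

lemma hasDerivAt_hFunArg (hx : x ≠ 0) : HasDerivAt (hFunArg n k) (-(x ^ 2)⁻¹ / (n - k)) x := by
  rw [show hFunArg n k = fun y : ℝ => (y⁻¹ - k) / (n - k) from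
    funext fun y => by rw [hFunArg, one_div]]
  exact ((hasDerivAt_inv hx).sub_const (k : ℝ)).div_const ((n : ℝ) - k)

lemma tendsto_hFun_nhdsNE_inv (hkn : k < n) : Tendsto (hFun n k) (𝓝[≠] (1 / n)) (𝓝 n) := by
  have hn : (0 : ℝ) < 1 / n := one_div_pos.mpr (Nat.cast_pos.mpr (Nat.zero_lt_of_lt hkn))
  have hnk : (n - k : ℝ) ≠ 0 := sub_ne_zero.mpr (by exact_mod_cast hkn.ne')
  have harg : Tendsto (hFunArg n k) (𝓝[≠] (1 / n)) (𝓝[≠] 1) := by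
    have h := (hasDerivAt_hFunArg (n := n) (k := k) hn.ne').tendsto_nhdsNE
      (div_ne_zero (neg_ne_zero.mpr (inv_ne_zero (pow_ne_zero 2 hn.ne'))) hnk)
    rwa [hFunArg, one_div_one_div, div_self hnk] at h
  have hinv : Tendsto (fun x : ℝ => x⁻¹) (𝓝[≠] (1 / n)) (𝓝 n) := by
    have h := (continuousAt_inv₀ hn.ne').tendsto.mono_left
      (nhdsWithin_le_nhds (s := {1 / (n : ℝ)}ᶜ))
    simpa only [one_div, inv_inv] using h
  have h := (tendsto_log_div_sub_one_nhdsNE_one.comp harg).mul hinv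
  rw [one_mul] at h
  refine h.congr' ?_
  filter_upwards [eventually_nhdsWithin_of_eventually_nhds (isOpen_Ioi.eventually_mem hn),
    self_mem_nhdsWithin] with x (hx0 : 0 < x) (hxn : x ≠ 1 / n)
  exact (hFun_eq_log_div_sub_one_mul_inv hkn hx0.ne' hxn).symm

lemma tendsto_hFun_nhdsGT_zero (hkn : k < n) : Tendsto (hFun n k) (𝓝[>] (0 : ℝ)) atTop := by
  have hnk : (0 : ℝ) < n - k := sub_pos.mpr (by exact_mod_cast hkn)
  have harg : Tendsto (hFunArg n k) (𝓝[>] 0) atTop := by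
    refine Tendsto.atTop_div_const hnk (tendsto_atTop_add_const_right _ _ ?_)
    exact tendsto_inv_nhdsGT_zero.congr fun x => (one_div x).symm
  have hfactor : Tendsto (fun x : ℝ => (n - k) / (1 - n * x)) (𝓝[>] 0) (𝓝 (n - k)) := by
    have hc : ContinuousAt (fun x : ℝ => (n - k) / (1 - n * x)) 0 :=
      continuousAt_const.div (by fun_prop) (by norm_num)
    simpa using hc.tendsto.mono_left nhdsWithin_le_nhds
  exact (tendsto_log_atTop.comp harg).atTop_mul_pos hnk hfactor

lemma tendsto_hFun_nhdsLT_inv (hk : 0 < k) (hkn : k < n) :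
    Tendsto (hFun n k) (𝓝[<] (1 / k)) atTop := by
  have hk' : (0 : ℝ) < k := by exact_mod_cast hk
  have hkn' : (k : ℝ) < n := by exact_mod_cast hkn
  have hnk : (0 : ℝ) < n - k := sub_pos.mpr hkn'
  have harg : Tendsto (hFunArg n k) (𝓝[<] (1 / k)) (𝓝[>] 0) := by
    refine tendsto_nhdsWithin_iff.mpr ⟨?_, ?_⟩
    · have hc : ContinuousAt (hFunArg n k) (1 / k) :=
        (hasDerivAt_hFunArg (by positivity)).continuousAt
      simpa [hFunArg] using hc.tendsto.mono_left nhdsWithin_le_nhds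
    · filter_upwards [eventually_nhdsWithin_of_eventually_nhds
        (isOpen_Ioi.eventually_mem (by positivity : (0 : ℝ) < 1 / k)), self_mem_nhdsWithin]
        with x (hx0 : 0 < x) (hxk : x < 1 / k)
      exact hFunArg_pos hkn ((lt_one_div hk' hx0).mpr hxk)
  have hden : 1 - n * (1 / k : ℝ) < 0 := by
    rw [mul_one_div, sub_neg, one_lt_div hk']; exact hkn'
  have hfactor : Tendsto (fun x : ℝ => (n - k) / (1 - n * x)) (𝓝[<] (1 / k))
      (𝓝 ((n - k) / (1 - n * (1 / k)))) := by
    have hc : ContinuousAt (fun x : ℝ => (n - k) / (1 - n * x)) (1 / k) :=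
      continuousAt_const.div (by fun_prop) hden.ne
    exact hc.tendsto.mono_left nhdsWithin_le_nhds
  exact (tendsto_log_nhdsGT_zero.comp harg).atBot_mul_neg (div_neg_of_pos_of_neg hnk hden) hfactor

end

theorem hFun_positive_and_tendsto_general (n k : ℕ) (hk : 1 ≤ k) (hkn : 2 * k ≤ n) :
    (∀ x ∈ Set.Ioo (0 : ℝ) (1 / k), x ≠ 1 / n → 0 < hFun n k x) ∧
    (∃ L : ℝ, 0 < L ∧ Tendsto (hFun n k) (𝓝[≠] (1 / n)) (𝓝 L)) ∧
    Tendsto (hFun n k) (𝓝[>] (0 : ℝ)) atTop ∧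
    Tendsto (hFun n k) (𝓝[<] ((1 : ℝ) / k)) atTop := by
  have hkn' : k < n := by omega
  exact ⟨fun x hx hxn => hFun_pos hk hkn' hx hxn,
    ⟨n, Nat.cast_pos.mpr (by omega), tendsto_hFun_nhdsNE_inv hkn'⟩,
    tendsto_hFun_nhdsGT_zero hkn', tendsto_hFun_nhdsLT_inv hk hkn'⟩

/-- h_{n,k} is positive on (0,1/k) (away from the removable point 1/n, at which it
has a finite positive limit), tends to +∞ as x → 0⁺ and as x → (1/k)⁻. -/
theorem hFun_positive_and_tendsto (n k : ℕ) (hk : 1 ≤ k) (hkn : 2 * k ≤ n) (hn : 3 < n) :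
    (∀ x ∈ Set.Ioo (0 : ℝ) (1 / k), x ≠ 1 / n → 0 < hFun n k x) ∧
    (∃ L : ℝ, 0 < L ∧ Tendsto (hFun n k) (𝓝[≠] (1 / n)) (𝓝 L)) ∧
    Tendsto (hFun n k) (𝓝[>] (0 : ℝ)) atTop ∧
    Tendsto (hFun n k) (𝓝[<] ((1 : ℝ) / k)) atTop :=
  hFun_positive_and_tendsto_general n k hk hkn
end

section
/- Let w_1,…,w_n be pairwise distinct unit vectors in ℝ^d with ω := max_{j≠k} |w_jᵀw_k| < 1. Let p ∈ Δ^{n-1} with p_j ≥ a and p_k ≥ a for some j ≠ k and a > 0, and set μ = Wp, u = (w_j − w_k)/‖w_j − w_k‖. Then uᵀ (β Σ_i p_i (w_i − μ)(w_i − μ)ᵀ) u ≥ (β/4) · a · (1 − ω)². -/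
open Finset
open scoped RealInnerProductSpace

/-!
Put `x = ⟪w j - μ, u⟫` and `y = ⟪w k - μ, u⟫`. Whatever `μ` is, `x - y = ‖w j - w k‖`, and since
the two vectors are unit vectors with `⟪w j, w k⟫ ≤ ω`, this gap satisfies `‖w j - w k‖² ≥ 2 (1 - ω)`.
Hence `x² + y² ≥ (x - y)² / 2 ≥ 1 - ω`, so the weighted sum is at least `a (1 - ω)`, which dominates
`a (1 - ω)² / 4` because `0 ≤ ω < 1`.
-/

section InnerProduct

variable {E : Type*} [NormedAddCommGroup E] [InnerProductSpace ℝ E]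

lemma two_mul_one_sub_le_norm_sub_sq {x y : E} {ω : ℝ} (hx : ‖x‖ = 1) (hy : ‖y‖ = 1)
    (hxy : ⟪x, y⟫ ≤ ω) : 2 * (1 - ω) ≤ ‖x - y‖ ^ 2 := by
  rw [norm_sub_sq_real, hx, hy]
  linarith

/-- Holds also when `x = y`, where the normalized direction is `0`. -/
lemma inner_sub_sub_inner_sub_normalized (x y m : E) :
    ⟪x - m, ‖x - y‖⁻¹ • (x - y)⟫ - ⟪y - m, ‖x - y‖⁻¹ • (x - y)⟫ = ‖x - y‖ := by
  rw [← inner_sub_left, sub_sub_sub_cancel_right, real_inner_smul_right,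
    real_inner_self_eq_norm_sq]
  rcases eq_or_ne ‖x - y‖ 0 with h | h
  · simp [h]
  · field_simp

end InnerProduct

lemma mul_add_le_sum_mul {ι : Type*} [DecidableEq ι] {s : Finset ι} {p q : ι → ℝ} {a : ℝ}
    {j k : ι} (hj : j ∈ s) (hk : k ∈ s) (hjk : j ≠ k) (hp : ∀ i ∈ s, 0 ≤ p i) (hq : ∀ i ∈ s, 0 ≤ q i)
    (hpj : a ≤ p j) (hpk : a ≤ p k) : a * (q j + q k) ≤ ∑ i ∈ s, p i * q i := calc
  a * (q j + q k) ≤ p j * q j + p k * q k := by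
    rw [mul_add]
    gcongr
    exacts [hq j hj, hq k hk]
  _ = ∑ i ∈ {j, k}, p i * q i := (sum_pair (f := fun i => p i * q i) hjk).symm
  _ ≤ ∑ i ∈ s, p i * q i :=
    sum_le_sum_of_subset_of_nonneg (insert_subset hj (singleton_subset_iff.mpr hk))
      fun i hi _ => mul_nonneg (hp i hi) (hq i hi)

theorem jacobian_quadratic_form_lower_bound_general (d n : ℕ) (β : ℝ) (hβ : 0 < β)
    (w : Fin n → EuclideanSpace ℝ (Fin d)) (hw : ∀ i, ‖w i‖ = 1)
    (ω : ℝ) (hω : ω < 1) (hωbound : ∀ i i', i ≠ i' → |⟪w i, w i'⟫| ≤ ω)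
    (p : Fin n → ℝ) (hp0 : ∀ i, 0 ≤ p i)
    (a : ℝ) (ha : 0 < a) (j k : Fin n) (hjk : j ≠ k) (hpj : a ≤ p j) (hpk : a ≤ p k)
    (μ : EuclideanSpace ℝ (Fin d))
    (u : EuclideanSpace ℝ (Fin d)) (hu : u = ‖w j - w k‖⁻¹ • (w j - w k)) :
    β / 4 * a * (1 - ω) ^ 2 ≤ β * ∑ i, p i * ⟪w i - μ, u⟫ ^ 2 := by
  have hω0 : 0 ≤ ω := (abs_nonneg _).trans (hωbound j k hjk)
  have hsep := two_mul_one_sub_le_norm_sub_sq (hw j) (hw k) (abs_le.mp (hωbound j k hjk)).2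
  have hgap : ⟪w j - μ, u⟫ - ⟪w k - μ, u⟫ = ‖w j - w k‖ :=
    hu ▸ inner_sub_sub_inner_sub_normalized (w j) (w k) μ
  have hpair : 1 - ω ≤ ⟪w j - μ, u⟫ ^ 2 + ⟪w k - μ, u⟫ ^ 2 := by
    have := add_sq_le (a := ⟪w j - μ, u⟫) (b := -⟪w k - μ, u⟫)
    rw [← sub_eq_add_neg, hgap, neg_sq] at this
    linarith
  have hsum : a * (1 - ω) ≤ ∑ i, p i * ⟪w i - μ, u⟫ ^ 2 :=
    (mul_le_mul_of_nonneg_left hpair ha.le).trans <|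
      mul_add_le_sum_mul (mem_univ j) (mem_univ k) hjk (fun i _ => hp0 i)
        (fun i _ => sq_nonneg ⟪w i - μ, u⟫) hpj hpk
  calc β / 4 * a * (1 - ω) ^ 2 = β * (a * ((1 - ω) * ((1 - ω) / 4))) := by ring
    _ ≤ β * (a * ((1 - ω) * 1)) := by gcongr; linarith
    _ ≤ β * ∑ i, p i * ⟪w i - μ, u⟫ ^ 2 := by rw [mul_one]; gcongr

/-- Quadratic form lower bound along the direction u = (w_j − w_k)/‖w_j − w_k‖:
uᵀ(β Σ_i p_i (w_i − μ)(w_i − μ)ᵀ)u ≥ (β/4)·a·(1−ω)². -/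
theorem jacobian_quadratic_form_lower_bound (d n : ℕ) (β : ℝ) (hβ : 0 < β)
    (w : Fin n → EuclideanSpace ℝ (Fin d)) (hw : ∀ i, ‖w i‖ = 1)
    (hdist : ∀ i i', i ≠ i' → w i ≠ w i')
    (ω : ℝ) (hω : ω < 1) (hωbound : ∀ i i', i ≠ i' → |⟪w i, w i'⟫| ≤ ω)
    (p : Fin n → ℝ) (hp0 : ∀ i, 0 ≤ p i) (hp1 : ∑ i, p i = 1)
    (a : ℝ) (ha : 0 < a) (j k : Fin n) (hjk : j ≠ k) (hpj : a ≤ p j) (hpk : a ≤ p k)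
    (μ : EuclideanSpace ℝ (Fin d)) (hμ : μ = ∑ i, p i • w i)
    (u : EuclideanSpace ℝ (Fin d)) (hu : u = ‖w j - w k‖⁻¹ • (w j - w k)) :
    β / 4 * a * (1 - ω) ^ 2 ≤ β * ∑ i, p i * ⟪w i - μ, u⟫ ^ 2 :=
  jacobian_quadratic_form_lower_bound_general d n β hβ w hw ω hω hωbound p hp0 a ha j k hjk hpj hpk
    μ u hu
end

section
/- Let p ∈ Δ^{n-1} be in the interior of the simplex with p_j ≥ a > 0 for at least two indices j, and let the vectors w_1, …, w_n be unit vectors with pairwise inner products bounded in absolute value by ω < 1. If x* = Wp is a fixed point of f(x) = W S_β(Wᵀx) and β > 4/(a(1−ω)²), then the spectral radius of the Jacobian of f at x* is strictly greater than 1, so x* is an unstable fixed point. -/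
/-!
At every point the Jacobian of the Hopfield map is `β` times the covariance operator of the
patterns `w i` under the softmax weights `p` (the mean term drops out because `∑ i, p i = 1`).
This operator is self-adjoint, so its spectral radius is its norm, which dominates every Rayleigh
quotient. Testing on `u = w j - w k`, the two heavy patterns alone give
`⟪J u, u⟫ ≥ β a ‖u‖⁴ / 2`, and `‖u‖² ≥ 2 (1 - ω)` makes this exceed `‖u‖²`
once `β > 4 / (a (1 - ω)²)`.
-/

open Real Finset
open scoped RealInnerProductSpace

noncomputable def hopfield (d n : ℕ) (β : ℝ) (w : Fin n → EuclideanSpace ℝ (Fin d))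
    (x : EuclideanSpace ℝ (Fin d)) : EuclideanSpace ℝ (Fin d) :=
  ∑ j, softmax n β (fun i => ⟪w i, x⟫) j • w j

open InnerProductSpace

theorem IsSelfAdjoint.lt_spectralRadius_of_mul_sq_lt_re_inner
    {𝕜 E : Type*} [RCLike 𝕜] [NormedAddCommGroup E] [InnerProductSpace 𝕜 E] [CompleteSpace E]
    {T : E →L[𝕜] E} (hT : IsSelfAdjoint T) {c : NNReal} {u : E}
    (h : c * ‖u‖ ^ 2 < RCLike.re (inner 𝕜 (T u) u)) : (c : ENNReal) < spectralRadius 𝕜 T := by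
  rw [T.spectralRadius_eq_nnnorm hT, ENNReal.coe_lt_coe, ← NNReal.coe_lt_coe, coe_nnnorm]
  have hle : RCLike.re (inner 𝕜 (T u) u) ≤ ‖T‖ * ‖u‖ ^ 2 :=
    calc RCLike.re (inner 𝕜 (T u) u) ≤ ‖T u‖ * ‖u‖ :=
          (RCLike.re_le_norm _).trans (norm_inner_le_norm _ _)
      _ ≤ ‖T‖ * ‖u‖ * ‖u‖ := by gcongr; exact T.le_opNorm u
      _ = ‖T‖ * ‖u‖ ^ 2 := by ring
  exact lt_of_mul_lt_mul_right (h.trans_le hle) (sq_nonneg _)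

section WeightedCovariance

variable {ι E : Type*} [Fintype ι] [NormedAddCommGroup E] [InnerProductSpace ℝ E]

def weightedMean (p : ι → ℝ) (w : ι → E) : E :=
  ∑ i, p i • w i

noncomputable def weightedCovariance (p : ι → ℝ) (w : ι → E) : E →L[ℝ] E :=
  ∑ i, p i • rankOne ℝ (w i - weightedMean p w) (w i - weightedMean p w)

theorem sum_smul_sub_weightedMean {p : ι → ℝ} (hp : ∑ i, p i = 1) (w : ι → E) :
    ∑ i, p i • (w i - weightedMean p w) = 0 := by
  simp [weightedMean, smul_sub, sum_sub_distrib, ← sum_smul, hp]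

theorem sum_smul_rankOne_sub_weightedMean {p : ι → ℝ} (hp : ∑ i, p i = 1) (w : ι → E) :
    ∑ i, p i • rankOne ℝ (w i) (w i - weightedMean p w) = weightedCovariance p w := by
  rw [weightedCovariance]
  set μ := weightedMean p w
  ext v
  have hcentered : ∑ i, p i * ⟪w i - μ, v⟫ = 0 := by
    simpa only [sum_inner, real_inner_smul_left, inner_zero_left]
      using congrArg (⟪·, v⟫) (sum_smul_sub_weightedMean hp w)
  simp only [_root_.sum_apply, smul_apply, rankOne_apply, smul_sub, sum_sub_distrib, smul_smul,
    ← sum_smul, hcentered, zero_smul, sub_zero]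

theorem inner_weightedCovariance_apply (p : ι → ℝ) (w : ι → E) (u v : E) :
    ⟪weightedCovariance p w u, v⟫ =
      ∑ i, p i * (⟪w i - weightedMean p w, u⟫ * ⟪w i - weightedMean p w, v⟫) := by
  simp only [weightedCovariance, _root_.sum_apply, smul_apply, rankOne_apply, sum_inner,
    real_inner_smul_left]

theorem isSymmetric_weightedCovariance (p : ι → ℝ) (w : ι → E) :
    (weightedCovariance p w : E →ₗ[ℝ] E).IsSymmetric := fun u v => by
  rw [ContinuousLinearMap.coe_coe, ← real_inner_comm u, inner_weightedCovariance_apply,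
    inner_weightedCovariance_apply]
  exact sum_congr rfl fun i _ => by ring

theorem mul_inner_sub_sq_le_two_mul_inner_weightedCovariance {p : ι → ℝ} (hp : ∀ i, 0 ≤ p i)
    (w : ι → E) (u : E) {a : ℝ} (ha : 0 ≤ a) {j k : ι} (hjk : j ≠ k)
    (hpj : a ≤ p j) (hpk : a ≤ p k) :
    a * ⟪w j - w k, u⟫ ^ 2 ≤ 2 * ⟪weightedCovariance p w u, u⟫ := by
  set c := fun i => ⟪w i - weightedMean p w, u⟫
  have hpair : p j * c j ^ 2 + p k * c k ^ 2 ≤ ⟪weightedCovariance p w u, u⟫ := by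
    classical
    calc p j * c j ^ 2 + p k * c k ^ 2 = ∑ i ∈ {j, k}, p i * c i ^ 2 := by rw [sum_pair hjk]
      _ ≤ ∑ i, p i * c i ^ 2 := sum_le_sum_of_subset_of_nonneg (subset_univ _)
          fun i _ _ => mul_nonneg (hp i) (sq_nonneg _)
      _ = ⟪weightedCovariance p w u, u⟫ := by simp only [inner_weightedCovariance_apply, sq, c]
  have hdiff : ⟪w j - w k, u⟫ = c j - c k := by
    simp only [c, ← inner_sub_left, sub_sub_sub_cancel_right]
  rw [hdiff]
  nlinarith [sq_nonneg (c j + c k), mul_le_mul_of_nonneg_right hpj (sq_nonneg (c j)),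
    mul_le_mul_of_nonneg_right hpk (sq_nonneg (c k))]

end WeightedCovariance

theorem hasFDerivAt_softmax_apply {n : ℕ} (β : ℝ) (z : Fin n → ℝ) (j : Fin n) :
    HasFDerivAt (fun z => softmax n β z j)
      ((β * softmax n β z j) • (.proj j - ∑ i, softmax n β z i • .proj i) :
        (Fin n → ℝ) →L[ℝ] ℝ) z := by
  set Z : (Fin n → ℝ) → ℝ := fun z => ∑ i, Real.exp (β * z i)
  have hZ : ∀ z, 0 < Z z := fun z => sum_pos (fun i _ => exp_pos _) ⟨j, mem_univ _⟩
  have hexp : ∀ i, HasFDerivAt (fun z : Fin n → ℝ => Real.exp (β * z i))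
      (Real.exp (β * z i) • β • ContinuousLinearMap.proj i) z := fun i =>
    ((hasFDerivAt_apply i z).const_mul β).exp
  have hlog : HasFDerivAt (fun z => Real.log (Z z))
      ((Z z)⁻¹ • ∑ i, Real.exp (β * z i) • β • ContinuousLinearMap.proj i) z :=
    (HasFDerivAt.fun_sum fun i _ => hexp i).log (hZ z).ne'
  have hsoftmax : (fun z => softmax n β z j) = fun z => Real.exp (β * z j - Real.log (Z z)) := by
    funext z
    rw [Real.exp_sub, Real.exp_log (hZ z)]
    rfl
  rw [hsoftmax]
  refine (((hasFDerivAt_apply j z).const_mul β).fun_sub hlog).exp.congr_fderiv ?_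
  ext v
  simp only [exp_sub, Real.exp_log (hZ z), smul_sum, smul_sub, sub_apply, smul_apply,
    ContinuousLinearMap.proj_apply, smul_eq_mul, _root_.sum_apply, softmax, Z]
  ring_nf

theorem hasFDerivAt_hopfield {d n : ℕ} (β : ℝ) (w : Fin n → EuclideanSpace ℝ (Fin d))
    (x : EuclideanSpace ℝ (Fin d)) (p : Fin n → ℝ) (hp : p = softmax n β fun i => ⟪w i, x⟫) :
    HasFDerivAt (hopfield d n β w) (β • ∑ i, p i • rankOne ℝ (w i) (w i - weightedMean p w)) x := by
  have hL : HasFDerivAt (fun y => fun i => ⟪w i, y⟫)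
      (ContinuousLinearMap.pi fun i => innerSL ℝ (w i)) x :=
    (ContinuousLinearMap.pi fun i => innerSL ℝ (w i)).hasFDerivAt
  refine (HasFDerivAt.fun_sum fun j _ =>
    ((hasFDerivAt_softmax_apply β _ j).comp x hL).smul_const (w j)).congr_fderiv
    (ContinuousLinearMap.ext fun v => ?_)
  rw [← hp]
  simp only [FunLike.coe_sum, Finset.sum_apply, ContinuousLinearMap.smulRight_apply,
    ContinuousLinearMap.comp_apply, smul_apply, sub_apply, ContinuousLinearMap.pi_apply,
    ContinuousLinearMap.proj_apply, innerSL_apply_apply, rankOne_apply, inner_sub_left, sum_inner,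
    real_inner_smul_left, smul_eq_mul, Finset.smul_sum, smul_smul, weightedMean]

theorem hopfield_unstable_fixed_point_general (d n : ℕ) (β : ℝ) (hβpos : 0 < β)
    (w : Fin n → EuclideanSpace ℝ (Fin d)) (hw : ∀ i, ‖w i‖ = 1)
    (ω : ℝ) (hω : ω < 1) (hωb : ∀ i i', i ≠ i' → |⟪w i, w i'⟫| ≤ ω)
    (p : Fin n → ℝ) (hp0 : ∀ i, 0 ≤ p i) (hp1 : ∑ i, p i = 1)
    (a : ℝ) (ha : 0 < a) (j k : Fin n) (hjk : j ≠ k) (hpj : a ≤ p j) (hpk : a ≤ p k)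
    (x : EuclideanSpace ℝ (Fin d))
    (hp : p = softmax n β fun i => ⟪w i, x⟫)
    (hβ : 4 / (a * (1 - ω) ^ 2) < β) :
    1 < spectralRadius ℝ (fderiv ℝ (hopfield d n β w) x) := by
  rw [(hasFDerivAt_hopfield β w x p hp).fderiv, sum_smul_rankOne_sub_weightedMean hp1]
  have hsymm : IsSelfAdjoint (β • weightedCovariance p w) :=
    (IsSelfAdjoint.all β).smul <|
      ContinuousLinearMap.isSelfAdjoint_iff_isSymmetric.mpr (isSymmetric_weightedCovariance p w)
  set u := w j - w k
  have hu : 2 * (1 - ω) ≤ ‖u‖ ^ 2 := by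
    rw [norm_sub_sq_real, hw j, hw k]
    linarith [(le_abs_self _).trans (hωb j k hjk)]
  have hcov := mul_inner_sub_sq_le_two_mul_inner_weightedCovariance hp0 w u ha.le hjk hpj hpk
  rw [real_inner_self_eq_norm_sq] at hcov
  have hω0 : 0 ≤ ω := (abs_nonneg _).trans (hωb j k hjk)
  have hβa : 4 < β * a * (1 - ω) := by
    have h := (div_lt_iff₀ (mul_pos ha (pow_pos (sub_pos.mpr hω) 2))).mp hβ
    nlinarith [mul_pos hβpos ha]
  have hβau : 2 < β * a * ‖u‖ ^ 2 := by nlinarith [mul_pos hβpos ha]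
  have hrayleigh : ‖u‖ ^ 2 < β * ⟪weightedCovariance p w u, u⟫ := by nlinarith
  exact_mod_cast hsymm.lt_spectralRadius_of_mul_sq_lt_re_inner (c := 1) (u := u) <| by
    simpa only [NNReal.coe_one, one_mul, RCLike.re_to_real, smul_apply, real_inner_smul_left]
      using hrayleigh

/-- If the fixed point x* = Wp keeps mass at least a on two coordinates and
β > 4/(a(1−ω)²), then the Jacobian of the Hopfield map at x* has spectral radius > 1,
i.e., x* is an unstable fixed point. -/
theorem hopfield_unstable_fixed_point (d n : ℕ) (β : ℝ) (hβpos : 0 < β)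
    (w : Fin n → EuclideanSpace ℝ (Fin d)) (hw : ∀ i, ‖w i‖ = 1)
    (ω : ℝ) (hω : ω < 1) (hωb : ∀ i i', i ≠ i' → |⟪w i, w i'⟫| ≤ ω)
    (p : Fin n → ℝ) (hp0 : ∀ i, 0 ≤ p i) (hp1 : ∑ i, p i = 1)
    (a : ℝ) (ha : 0 < a) (j k : Fin n) (hjk : j ≠ k) (hpj : a ≤ p j) (hpk : a ≤ p k)
    (x : EuclideanSpace ℝ (Fin d)) (hx : x = ∑ i, p i • w i)
    (hp : p = softmax n β fun i => ⟪w i, x⟫)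
    (hfix : hopfield d n β w x = x)
    (hβ : 4 / (a * (1 - ω) ^ 2) < β) :
    1 < spectralRadius ℝ (fderiv ℝ (hopfield d n β w) x) :=
  hopfield_unstable_fixed_point_general d n β hβpos w hw ω hω hωb p hp0 hp1 a ha j k hjk hpj hpk x
    hp hβ
end
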